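/- For every real r > 0, (1/(2π))·∫_{ℝ} (2r/(r^2+t^2))·log(r^2+t^2) dt = 2·log 2 + 2·log r. -/

import Mathlib

/-!
Substitute `t = r tan θ`, `θ ∈ (-π/2, π/2)`. Since `r² + t² = (r / cos θ)²` and
`dt = r / cos² θ dθ`, the weight `2r / (r² + t²) dt` becomes `2 dθ`, so the integral equals
`∫ (4 log r - 4 log cos θ) dθ` over `(-π/2, π/2)`; after a shift by `π/2` the last term is
Euler's integral `∫₀^π log sin = -π log 2`.
-/

open MeasureTheory Real Set

theorem integral_comp_mul_tan {E : Type*} [NormedAddCommGroup E] [NormedSpace ℝ E] {r : ℝ}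
    (hr : 0 < r) (g : ℝ → E) :
    ∫ t, g t = ∫ θ in Ioo (-(π / 2)) (π / 2), (r / cos θ ^ 2) • g (r * tan θ) := by
  have himage : (fun θ ↦ r * tan θ) '' Ioo (-(π / 2)) (π / 2) = univ := by
    rw [← image_image (r * ·) tan, image_tan_Ioo, image_univ_of_surjective]
    exact mul_left_surjective₀ hr.ne'
  have hderiv : ∀ θ ∈ Ioo (-(π / 2)) (π / 2),
      HasDerivWithinAt (fun θ ↦ r * tan θ) (r / cos θ ^ 2) (Ioo (-(π / 2)) (π / 2)) θ := by
    intro θ hθ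
    simpa [div_eq_mul_inv] using
      ((hasDerivAt_tan (cos_pos_of_mem_Ioo hθ).ne').const_mul r).hasDerivWithinAt
  have hinj : InjOn (fun θ ↦ r * tan θ) (Ioo (-(π / 2)) (π / 2)) :=
    (mul_right_injective₀ hr.ne').comp_injOn injOn_tan
  rw [← setIntegral_univ, ← himage,
    integral_image_eq_integral_abs_deriv_smul measurableSet_Ioo hderiv hinj]
  refine setIntegral_congr_fun measurableSet_Ioo fun θ hθ ↦ ?_
  rw [abs_of_pos (by have := cos_pos_of_mem_Ioo hθ; positivity)]

theorem integral_log_cos_neg_pi_div_two_pi_div_two :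
    ∫ θ in -(π / 2)..π / 2, log (cos θ) = -log 2 * π := by
  have hshift :=
    intervalIntegral.integral_comp_sub_right (fun θ ↦ log (cos θ)) (π / 2) (a := 0) (b := π)
  simp only [cos_sub_pi_div_two, integral_log_sin_zero_pi] at hshift
  rw [zero_sub, show π - π / 2 = π / 2 by ring] at hshift
  exact hshift.symm

theorem sq_add_sq_mul_tan {r θ : ℝ} (hθ : cos θ ≠ 0) :
    r ^ 2 + (r * tan θ) ^ 2 = (r / cos θ) ^ 2 := by
  rw [tan_eq_sin_div_cos]
  field_simp
  rw [add_comm, sin_sq_add_cos_sq, mul_one]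

theorem div_cos_sq_mul_laguerre_log_comp_mul_tan {r θ : ℝ} (hr : r ≠ 0) (hθ : cos θ ≠ 0) :
    r / cos θ ^ 2 * (2 * r / (r ^ 2 + (r * tan θ) ^ 2) * log (r ^ 2 + (r * tan θ) ^ 2))
      = 4 * log r - 4 * log (cos θ) := by
  rw [sq_add_sq_mul_tan hθ, log_pow, log_div hr hθ]
  field_simp
  ring

/-- The computation in the proof of Lemma 4.7:
`(1/2π)∫_ℝ (2r/(r²+t²))·log(r²+t²) dt = 2 log 2 + 2 log r` for `r > 0`. -/
theorem integral_laguerre_log (r : ℝ) (hr : 0 < r) :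
    (1 / (2 * Real.pi)) *
        ∫ t : ℝ, (2 * r / (r ^ 2 + t ^ 2)) * Real.log (r ^ 2 + t ^ 2) =
      2 * Real.log 2 + 2 * Real.log r := by
  have hI : ∫ t : ℝ, (2 * r / (r ^ 2 + t ^ 2)) * log (r ^ 2 + t ^ 2)
      = ∫ θ in -(π / 2)..π / 2, (4 * log r - 4 * log (cos θ)) := by
    rw [integral_comp_mul_tan hr, intervalIntegral.integral_of_le (by linarith [pi_pos]),
      integral_Ioc_eq_integral_Ioo]
    exact setIntegral_congr_fun measurableSet_Ioo fun θ hθ ↦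
      div_cos_sq_mul_laguerre_log_comp_mul_tan hr.ne' (cos_pos_of_mem_Ioo hθ).ne'
  have hlog_cos : IntervalIntegrable (fun θ ↦ log (cos θ)) volume (-(π / 2)) (π / 2) :=
    intervalIntegrable_log_cos
  rw [hI, intervalIntegral.integral_sub intervalIntegrable_const (hlog_cos.const_mul 4),
    intervalIntegral.integral_const, intervalIntegral.integral_const_mul,
    integral_log_cos_neg_pi_div_two_pi_div_two, smul_eq_mul]
  field_simp
  ring
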